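/- arXiv:1506.07420 — 2 statements merged into one kernel-verified Lean document; each statement's English description precedes it below -/
import Mathlib

section
/- The complex-valued function k(x) = e^(2ix)·( 1 + (1/2)·sech²(x/√2) + i·√2·tanh(x/√2) ) satisfies k''(x) + 4·k(x) + 3·sech²(x/√2)·k(x) = 0 for all real x, and k(-x) = conj(k(x)) for all real x. -/
/-!
Write `kJost x = exp (2 i x) g(x)` with `g = 1 + S/2 + i √2 T`, where `S = sech² (x/√2)` and
`T = tanh (x/√2)`. Then `k'' + 4k = exp (2 i x) (g'' + 4 i g')`, and since `S' = -√2 S T` and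
`T' = S/√2`, the left-hand side of the equation becomes `exp (2 i x) S (S + T² - 1)`, which
vanishes. The symmetry comes from `sech` being even and `tanh` odd.
-/

noncomputable def sech (x : ℝ) : ℝ := 1 / Real.cosh x

noncomputable def kJost (x : ℝ) : ℂ :=
  Complex.exp (2 * Complex.I * (x : ℂ)) *
    (1 + ((1 / 2 * sech (x / Real.sqrt 2) ^ 2 : ℝ) : ℂ)
      + Complex.I * (Real.sqrt 2 : ℂ) * ((Real.tanh (x / Real.sqrt 2) : ℝ) : ℂ))

open Real
open Complex (I)
open scoped Complex

theorem sech_neg (y : ℝ) : sech (-y) = sech y := by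
  rw [sech, sech, cosh_neg]

theorem sech_sq_add_tanh_sq (y : ℝ) : sech y ^ 2 + tanh y ^ 2 = 1 := by
  have hc := (cosh_pos y).ne'
  rw [sech, tanh_eq_sinh_div_cosh]
  field_simp
  linear_combination -cosh_sq y

theorem hasDerivAt_sech (y : ℝ) : HasDerivAt sech (-(sech y * tanh y)) y := by
  have hc := (cosh_pos y).ne'
  have h := (hasDerivAt_const y (1 : ℝ)).div (hasDerivAt_cosh y) hc
  refine h.congr_deriv ?_
  rw [sech, tanh_eq_sinh_div_cosh]
  field_simp
  ring

theorem hasDerivAt_tanh (y : ℝ) : HasDerivAt tanh (sech y ^ 2) y := by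
  have hc := (cosh_pos y).ne'
  have h := (hasDerivAt_sinh y).div (hasDerivAt_cosh y) hc
  rw [show sinh / cosh = tanh from (funext tanh_eq_sinh_div_cosh).symm] at h
  refine h.congr_deriv ?_
  rw [sech]
  field_simp
  linear_combination cosh_sq y

theorem hasDerivAt_sech_div_sq (b x : ℝ) :
    HasDerivAt (fun x => sech (x / b) ^ 2) (-2 * sech (x / b) ^ 2 * tanh (x / b) / b) x := by
  have h := ((hasDerivAt_sech (x / b)).comp x ((hasDerivAt_id x).div_const b)).pow 2
  refine h.congr_deriv ?_
  simp only [Function.comp_apply, id]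
  ring

theorem hasDerivAt_tanh_div (b x : ℝ) :
    HasDerivAt (fun x => tanh (x / b)) (sech (x / b) ^ 2 / b) x := by
  have h := (hasDerivAt_tanh (x / b)).comp x ((hasDerivAt_id x).div_const b)
  refine h.congr_deriv ?_
  ring

theorem hasDerivAt_cexp_mul {c : ℂ} {g : ℝ → ℂ} {g' : ℂ} {x : ℝ} (hg : HasDerivAt g g' x) :
    HasDerivAt (fun x : ℝ => cexp (c * x) * g x) (cexp (c * x) * (g' + c * g x)) x := by
  have he : HasDerivAt (fun x : ℝ => cexp (c * x)) (cexp (c * x) * c) x := by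
    simpa using ((hasDerivAt_id (x : ℂ)).const_mul c).cexp.comp_ofReal
  refine (he.mul hg).congr_deriv ?_
  ring

theorem deriv_deriv_cexp_mul (c : ℂ) {g g' g'' : ℝ → ℂ} (hg : ∀ x, HasDerivAt g (g' x) x)
    (hg' : ∀ x, HasDerivAt g' (g'' x) x) (x : ℝ) :
    deriv (deriv fun x : ℝ => cexp (c * x) * g x) x =
      cexp (c * x) * (g'' x + 2 * c * g' x + c ^ 2 * g x) := by
  rw [funext fun x : ℝ => (hasDerivAt_cexp_mul (c := c) (hg x)).deriv]
  refine (hasDerivAt_cexp_mul ((hg' x).add ((hg x).const_mul c))).deriv.trans ?_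
  rw [Pi.add_apply]
  ring

theorem ofReal_sqrt_two_sq : ((√2 : ℝ) : ℂ) ^ 2 = 2 := by
  rw [← Complex.ofReal_pow, sq_sqrt zero_le_two, Complex.ofReal_ofNat]

noncomputable def jostProfile (x : ℝ) : ℂ :=
  1 + ((1 / 2 * sech (x / √2) ^ 2 : ℝ) : ℂ) + I * (√2 : ℂ) * ((tanh (x / √2) : ℝ) : ℂ)

theorem kJost_eq_cexp_mul_jostProfile : kJost = fun x : ℝ => cexp (2 * I * x) * jostProfile x :=
  rfl

theorem hasDerivAt_jostProfile (x : ℝ) :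
    HasDerivAt jostProfile
      (((sech (x / √2) ^ 2 : ℝ) : ℂ) * (I - ((tanh (x / √2) : ℝ) : ℂ) / √2)) x := by
  have h := (((hasDerivAt_sech_div_sq √2 x).const_mul (1 / 2)).ofReal_comp.const_add 1).add
    ((hasDerivAt_tanh_div √2 x).ofReal_comp.const_mul (I * (√2 : ℂ)))
  refine h.congr_deriv ?_
  simp only [Complex.ofReal_mul, Complex.ofReal_div, Complex.ofReal_neg, Complex.ofReal_pow,
    Complex.ofReal_ofNat, Complex.ofReal_one]
  field_simp
  ring

theorem hasDerivAt_deriv_jostProfile (x : ℝ) :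
    HasDerivAt (deriv jostProfile)
      (((sech (x / √2) ^ 2 : ℝ) : ℂ) * (((tanh (x / √2) : ℝ) : ℂ) ^ 2
        - ((sech (x / √2) ^ 2 : ℝ) : ℂ) / 2 - I * √2 * ((tanh (x / √2) : ℝ) : ℂ))) x := by
  rw [funext fun y => (hasDerivAt_jostProfile y).deriv]
  have h := (hasDerivAt_sech_div_sq √2 x).ofReal_comp.mul
    (((hasDerivAt_tanh_div √2 x).ofReal_comp.div_const (√2 : ℂ)).const_sub I)
  refine h.congr_deriv ?_
  simp only [Complex.ofReal_mul, Complex.ofReal_div, Complex.ofReal_neg, Complex.ofReal_pow,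
    Complex.ofReal_ofNat]
  field_simp
  linear_combination (2 * I * √2 * (sech (x / √2) : ℂ) ^ 2 * (tanh (x / √2) : ℂ)
    - 2 * (sech (x / √2) : ℂ) ^ 2 * (tanh (x / √2) : ℂ) ^ 2 + (sech (x / √2) : ℂ) ^ 4)
    * ofReal_sqrt_two_sq

theorem kJost_neg (x : ℝ) : kJost (-x) = (starRingEnd ℂ) (kJost x) := by
  simp only [kJost, neg_div, sech_neg, tanh_neg, map_mul, map_add, map_one, ← Complex.exp_conj,
    Complex.conj_I, Complex.conj_ofReal, map_ofNat, Complex.ofReal_neg]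
  ring_nf

theorem kJost_solves_homogeneous_equation :
    (∀ x : ℝ, deriv (deriv kJost) x + 4 * kJost x
        + 3 * ((sech (x / Real.sqrt 2) ^ 2 : ℝ) : ℂ) * kJost x = 0) ∧
    (∀ x : ℝ, kJost (-x) = (starRingEnd ℂ) (kJost x)) := by
  refine ⟨fun x => ?_, kJost_neg⟩
  have hg (y : ℝ) : HasDerivAt jostProfile (deriv jostProfile y) y :=
    (hasDerivAt_jostProfile y).differentiableAt.hasDerivAt
  rw [kJost_eq_cexp_mul_jostProfile, deriv_deriv_cexp_mul (2 * I) hg hasDerivAt_deriv_jostProfile,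
    (hasDerivAt_jostProfile x).deriv]
  have hpyth : ((sech (x / √2) : ℝ) : ℂ) ^ 2 + ((tanh (x / √2) : ℝ) : ℂ) ^ 2 = 1 := by
    exact_mod_cast sech_sq_add_tanh_sq (x / √2)
  simp only [jostProfile, Complex.ofReal_mul, Complex.ofReal_pow, Complex.ofReal_div,
    Complex.ofReal_one, Complex.ofReal_ofNat]
  field_simp
  set E := cexp (2 * I * x)
  set σ := ((sech (x / √2) : ℝ) : ℂ)
  set τ := ((tanh (x / √2) : ℝ) : ℂ)
  set s := ((√2 : ℝ) : ℂ)
  linear_combination 2 * E * σ ^ 2 * s * hpyth + 4 * E * σ ^ 2 * τ * I * ofReal_sqrt_two_sq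
    + (8 * E * s + 8 * E * s ^ 2 * τ * I + 12 * E * σ ^ 2 * s) * Complex.I_sq
end

section
/- There exists a constant C > 0 with the following property: for every odd differentiable function v : ℝ → ℝ such that the function w(x) = sech(x/(8√2))·v(x) and its derivative w' are square integrable on ℝ, one has ∫_ℝ ( v'(x)² + v(x)² )·sech(x/(2√2)) dx ≤ C·∫_ℝ w'(x)² dx. -/
open MeasureTheory

/-! Oddness gives `w 0 = 0`, so the fundamental theorem of calculus and Cauchy–Schwarz give
`w x ^ 2 ≤ |x| ‖w'‖₂²`. With `ζ = sech (· / c)` one has `|ζ'| ≤ ζ / c` and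
`sech (4 t) ≤ sech t ^ 4`; writing `ζ² v' = ζ w' - ζ' w`, the weighted integrand
`(v'² + v²) sech (4 x / c)` is then bounded pointwise by `2 w'² + C |x| ζ² ‖w'‖₂²`, and
`|x| ζ²` is integrable. -/

open Real Set

theorem sq_integral_le_measureReal_univ_mul_integral_sq {α : Type*} [MeasurableSpace α]
    {μ : Measure α} [IsFiniteMeasure μ] {g : α → ℝ} (hg : MemLp g 2 μ) :
    (∫ x, g x ∂μ) ^ 2 ≤ μ.real univ * ∫ x, g x ^ 2 ∂μ := by
  have hg1 : Integrable g μ := hg.integrable one_le_two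
  have hg2 : Integrable (fun x => g x ^ 2) μ := hg.integrable_sq
  -- `∫ (g - t)² ≥ 0` for every `t`: a nonnegative quadratic in `t` has nonpositive discriminant.
  have hquad : ∀ t : ℝ,
      0 ≤ μ.real univ * (t * t) + (-2 * ∫ x, g x ∂μ) * t + ∫ x, g x ^ 2 ∂μ := by
    intro t
    calc 0 ≤ ∫ x, (g x - t) ^ 2 ∂μ := integral_nonneg fun _ => sq_nonneg _
      _ = ∫ x, (g x ^ 2 + (-2 * t) * g x + t ^ 2) ∂μ := by congr 1; ext x; ring
      _ = _ := by
        have hlin : Integrable (fun x => g x ^ 2 + -2 * t * g x) μ := hg2.add (hg1.const_mul _)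
        rw [integral_add hlin (integrable_const _),
          integral_add hg2 (hg1.const_mul _), integral_const_mul, integral_const, smul_eq_mul]
        ring
  have := discrim_le_zero hquad
  rw [discrim] at this
  linarith

theorem sq_sub_le_mul_integral_sq_deriv {f : ℝ → ℝ} (hf : Differentiable ℝ f)
    (hf' : Integrable fun x => deriv f x ^ 2) {a b : ℝ} (hab : a ≤ b) :
    (f b - f a) ^ 2 ≤ (b - a) * ∫ x, deriv f x ^ 2 := by
  have hL2 : MemLp (deriv f) 2 (volume.restrict (Ioc a b)) :=
    ((memLp_two_iff_integrable_sq (measurable_deriv f).aestronglyMeasurable).2 hf').restrict _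
  have hftc : f b - f a = ∫ x in Ioc a b, deriv f x := by
    rw [← intervalIntegral.integral_of_le hab, intervalIntegral.integral_deriv_eq_sub
      (fun x _ => hf x) ((intervalIntegrable_iff_integrableOn_Ioc_of_le hab).2
        (hL2.integrable one_le_two))]
  calc (f b - f a) ^ 2 ≤ (b - a) * ∫ x in Ioc a b, deriv f x ^ 2 := by
        simpa [hftc, measureReal_restrict_apply_univ, Real.volume_real_Ioc_of_le hab]
          using sq_integral_le_measureReal_univ_mul_integral_sq hL2
    _ ≤ (b - a) * ∫ x, deriv f x ^ 2 :=
        mul_le_mul_of_nonneg_left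
          (setIntegral_le_integral hf' (ae_of_all _ fun _ => sq_nonneg _)) (sub_nonneg.2 hab)

theorem sq_le_abs_mul_integral_sq_deriv {f : ℝ → ℝ} (hf : Differentiable ℝ f)
    (hf' : Integrable fun x => deriv f x ^ 2) (h0 : f 0 = 0) (x : ℝ) :
    f x ^ 2 ≤ |x| * ∫ t, deriv f t ^ 2 := by
  rcases le_total 0 x with hx | hx
  · simpa [h0, abs_of_nonneg hx] using sq_sub_le_mul_integral_sq_deriv hf hf' hx
  · simpa [h0, abs_of_nonpos hx] using sq_sub_le_mul_integral_sq_deriv hf hf' hx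

theorem sech_pos (x : ℝ) : 0 < sech x := one_div_pos.2 (cosh_pos x)

theorem sech_le_one (x : ℝ) : sech x ≤ 1 := by
  rw [sech, div_le_one (cosh_pos x)]
  exact one_le_cosh x

theorem hasDerivAt_sech_s19 (x : ℝ) : HasDerivAt sech (-(sinh x / cosh x ^ 2)) x := by
  rw [show sech = fun y => (cosh y)⁻¹ from funext fun y => one_div _, ← neg_div]
  exact (hasDerivAt_cosh x).inv (cosh_pos x).ne'

theorem sq_sinh_div_cosh_sq_le_sech_sq (x : ℝ) : (sinh x / cosh x ^ 2) ^ 2 ≤ sech x ^ 2 := by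
  have h : sinh x / cosh x ^ 2 = tanh x * sech x := by
    have := cosh_pos x
    rw [tanh_eq_sinh_div_cosh]
    unfold sech
    field_simp
  rw [h, mul_pow]
  exact mul_le_of_le_one_left (sq_nonneg _) (tanh_sq_lt_one x).le

theorem sech_four_mul_le (x : ℝ) : sech (4 * x) ≤ sech x ^ 4 := by
  have hcosh : cosh x ^ 4 ≤ cosh (4 * x) := by
    rw [show 4 * x = 2 * (2 * x) by ring, cosh_two_mul, cosh_two_mul, sinh_two_mul]
    nlinarith [sq_nonneg (sinh x), one_le_cosh x, sq_nonneg (cosh x ^ 2 - 1), cosh_sq x]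
  rw [sech, sech, div_pow, one_pow]
  exact one_div_le_one_div_of_le (by positivity) hcosh

theorem abs_mul_sech_sq_le (x : ℝ) : |x| * sech x ^ 2 ≤ 4 * (1 + x ^ 2)⁻¹ := by
  have hexp : 1 + |x| + |x| ^ 2 / 2 ≤ 2 * cosh x := by
    rw [← cosh_abs, cosh_eq]
    linarith [quadratic_le_exp_of_nonneg (abs_nonneg x), exp_pos (-|x|)]
  have hcubic : |x| * (1 + x ^ 2) ≤ 4 * cosh x ^ 2 := by
    have := abs_nonneg x
    nlinarith [sq_abs x]
  have := cosh_pos x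
  rw [sech]
  field_simp
  linarith

theorem integrable_abs_mul_sech_sq : Integrable fun x => |x| * sech x ^ 2 := by
  refine (integrable_inv_one_add_sq.const_mul 4).mono' ?_ (ae_of_all _ fun x => ?_)
  · exact (continuous_abs.mul ((continuous_const.div continuous_cosh
      fun x => (cosh_pos x).ne').pow 2)).aestronglyMeasurable
  · rw [norm_of_nonneg (by positivity)]
    exact abs_mul_sech_sq_le x

theorem integrable_abs_mul_sech_div_sq {c : ℝ} (hc : c ≠ 0) :
    Integrable fun x => |x| * sech (x / c) ^ 2 := by
  refine ((integrable_abs_mul_sech_sq.comp_div hc).const_mul |c|).congr (ae_of_all _ fun x => ?_)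
  simp only [abs_div]
  field_simp

-- Read `s = ζ x`, `s' = ζ' x`, `a = v x`, `a' = v' x`, so that `s * a = w x` and
-- `s' * a + s * a' = w' x`; the bound comes from `s ^ 2 * a' = s * w' x - s' * w x`.
theorem sq_add_sq_mul_pow_four_le {s s' a a' κ : ℝ} (hs : s ^ 2 ≤ 1) (hs' : s' ^ 2 ≤ κ * s ^ 2) :
    (a' ^ 2 + a ^ 2) * s ^ 4 ≤ 2 * (s' * a + s * a') ^ 2 + (1 + 2 * κ) * s ^ 2 * (s * a) ^ 2 := by
  have hsplit : s ^ 2 * a' = s * (s' * a + s * a') - s' * (s * a) := by ring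
  have : (s ^ 2 * a') ^ 2 ≤ 2 * s ^ 2 * (s' * a + s * a') ^ 2 + 2 * s' ^ 2 * (s * a) ^ 2 := by
    rw [hsplit]
    nlinarith [sq_nonneg (s * (s' * a + s * a') + s' * (s * a))]
  nlinarith [mul_le_mul_of_nonneg_right hs (sq_nonneg (s' * a + s * a')),
    mul_le_mul_of_nonneg_right hs' (sq_nonneg (s * a))]

theorem integral_sq_add_sq_mul_sech_le {c : ℝ} (hc : c ≠ 0) {v : ℝ → ℝ}
    (hv : Differentiable ℝ v) (hv0 : v 0 = 0)
    (hw' : Integrable fun x => deriv (fun y => sech (y / c) * v y) x ^ 2) :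
    ∫ x, (deriv v x ^ 2 + v x ^ 2) * sech (4 * (x / c)) ≤
      (2 + (1 + 2 / c ^ 2) * ∫ x, |x| * sech (x / c) ^ 2) *
        ∫ x, deriv (fun y => sech (y / c) * v y) x ^ 2 := by
  set w := fun y => sech (y / c) * v y
  set I := ∫ x, deriv w x ^ 2
  set K := ∫ x, |x| * sech (x / c) ^ 2
  have hζ (x : ℝ) :
      HasDerivAt (fun y => sech (y / c)) (-(sinh (x / c) / cosh (x / c) ^ 2) / c) x := by
    have := (hasDerivAt_sech_s19 (x / c)).comp x ((hasDerivAt_id' x).div_const c)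
    rwa [one_div, ← div_eq_mul_inv] at this
  have hw (x : ℝ) : HasDerivAt w (-(sinh (x / c) / cosh (x / c) ^ 2) / c * v x
      + sech (x / c) * deriv v x) x := (hζ x).mul (hv x).hasDerivAt
  have hw_sq (x : ℝ) : w x ^ 2 ≤ |x| * I :=
    sq_le_abs_mul_integral_sq_deriv (fun x => (hw x).differentiableAt) hw' (by simp [w, hv0]) x
  have hζ_sq (x : ℝ) : (-(sinh (x / c) / cosh (x / c) ^ 2) / c) ^ 2 ≤
      1 / c ^ 2 * sech (x / c) ^ 2 := by
    rw [div_pow, neg_sq, div_eq_mul_inv, mul_comm, one_div]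
    exact mul_le_mul_of_nonneg_left (sq_sinh_div_cosh_sq_le_sech_sq _) (by positivity)
  have hpt (x : ℝ) : (deriv v x ^ 2 + v x ^ 2) * sech (4 * (x / c)) ≤
      2 * deriv w x ^ 2 + (1 + 2 / c ^ 2) * I * (|x| * sech (x / c) ^ 2) := by
    have hs : sech (x / c) ^ 2 ≤ 1 := pow_le_one₀ (sech_pos _).le (sech_le_one _)
    calc (deriv v x ^ 2 + v x ^ 2) * sech (4 * (x / c))
        ≤ (deriv v x ^ 2 + v x ^ 2) * sech (x / c) ^ 4 :=
          mul_le_mul_of_nonneg_left (sech_four_mul_le _) (by positivity)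
      _ ≤ 2 * deriv w x ^ 2 + (1 + 2 * (1 / c ^ 2)) * sech (x / c) ^ 2 * w x ^ 2 := by
          rw [(hw x).deriv]
          exact sq_add_sq_mul_pow_four_le hs (hζ_sq x)
      _ ≤ 2 * deriv w x ^ 2 + (1 + 2 * (1 / c ^ 2)) * sech (x / c) ^ 2 * (|x| * I) := by
          gcongr
          exact hw_sq x
      _ = _ := by ring
  calc ∫ x, (deriv v x ^ 2 + v x ^ 2) * sech (4 * (x / c))
      ≤ ∫ x, (2 * deriv w x ^ 2 + (1 + 2 / c ^ 2) * I * (|x| * sech (x / c) ^ 2)) :=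
        integral_mono_of_nonneg (ae_of_all _ fun x => mul_nonneg (by positivity) (sech_pos _).le)
          ((hw'.const_mul 2).add ((integrable_abs_mul_sech_div_sq hc).const_mul _))
          (ae_of_all _ hpt)
    _ = (2 + (1 + 2 / c ^ 2) * K) * I := by
        rw [integral_add (hw'.const_mul 2) ((integrable_abs_mul_sech_div_sq hc).const_mul _),
          integral_const_mul, integral_const_mul]
        ring

theorem weighted_H1_controlled_by_derivative :
    ∃ C > 0, ∀ v : ℝ → ℝ,
      (∀ x : ℝ, v (-x) = -v x) →
      Differentiable ℝ v →
      Integrable (fun x => (sech (x / (8 * Real.sqrt 2)) * v x) ^ 2) →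
      Integrable (fun x => (deriv (fun y => sech (y / (8 * Real.sqrt 2)) * v y) x) ^ 2) →
      (∫ x : ℝ, ((deriv v x) ^ 2 + (v x) ^ 2) * sech (x / (2 * Real.sqrt 2)))
        ≤ C * (∫ x : ℝ, (deriv (fun y => sech (y / (8 * Real.sqrt 2)) * v y) x) ^ 2) := by
  have hc : 8 * √2 ≠ 0 := by positivity
  refine ⟨2 + (1 + 2 / (8 * √2) ^ 2) * ∫ x, |x| * sech (x / (8 * √2)) ^ 2, by positivity,
    fun v hodd hv _ hw' => ?_⟩
  have hv0 : v 0 = 0 := by linarith [show v 0 = -v 0 by simpa using hodd 0]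
  have harg (x : ℝ) : x / (2 * √2) = 4 * (x / (8 * √2)) := by field_simp; ring
  simp_rw [harg]
  exact integral_sq_add_sq_mul_sech_le hc hv hv0 hw'
end
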